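/- arXiv:2206.10755 — 4 statements merged into one kernel-verified Lean document; each statement's English description precedes it below -/
import Mathlib

section
/- Although homotopies need not commute with the maps of the factorizations, they commute with the square of the maps: if s = (s₁,…,s_d) is a homotopy between morphisms φ, φ' : (M_i,f_i) → (N_i,g_i) of d-fold factorizations, then for all i, g_{i+1} ∘ g_i ∘ s_i = s_{i+2} ∘ f_{i+2} ∘ f_{i+1} (indices taken cyclically, applying S where appropriate). -/
open CategoryTheory CategoryTheory.Limits

universe v u

variable {C : Type u} [Category.{v} C] [Preadditive C]

/-- The composite of `k` consecutive maps of an `ℤ`-indexed sequence, starting at `n`. -/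
def pcomp (X : ℤ → C) (f : ∀ n : ℤ, X n ⟶ X (n + 1)) :
    (k : ℕ) → (n : ℤ) → (X n ⟶ X (n + k))
  | 0, n => eqToHom (congrArg X (by simp))
  | k + 1, n => f n ≫ pcomp X f k (n + 1) ≫ eqToHom (congrArg X (by push_cast; ring))

/-- A `d`-fold `(𝒞,S)`-factorization of `η`, presented as an `S`-periodic `ℤ`-indexed
sequence of morphisms in which each composite of `d` consecutive maps is the corresponding
component of `η`. -/
structure Factorization (S : C ⥤ C) (η : 𝟭 C ⟶ S) (d : ℕ) where
  X : ℤ → C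
  f : ∀ n : ℤ, X n ⟶ X (n + 1)
  per : ∀ n : ℤ, S.obj (X n) ≅ X (n + d)
  f_per : ∀ n : ℤ, S.map (f n) =
    (per n).hom ≫ f (n + d) ≫ eqToHom (congrArg X (by ring)) ≫ (per (n + 1)).inv
  comp_eq : ∀ n : ℤ, pcomp X f d n = η.app (X n) ≫ (per n).hom

/-- A morphism of `d`-fold factorizations. -/
structure IsFactMor {S : C ⥤ C} {η : 𝟭 C ⟶ S} {d : ℕ}
    (A B : Factorization S η d) (φ : ∀ n : ℤ, A.X n ⟶ B.X n) : Prop where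
  comm : ∀ n : ℤ, A.f n ≫ φ (n + 1) = φ n ≫ B.f n
  per : ∀ n : ℤ, S.map (φ n) = (A.per n).hom ≫ φ (n + d) ≫ (B.per n).inv

/-- A homotopy between two morphisms of `d`-fold factorizations. -/
structure IsHomotopy {S : C ⥤ C} {η : 𝟭 C ⟶ S} {d : ℕ}
    (A B : Factorization S η d) (φ φ' : ∀ n : ℤ, A.X n ⟶ B.X n)
    (s : ∀ n : ℤ, A.X (n + 1) ⟶ B.X n) : Prop where
  per : ∀ n : ℤ, S.map (s n) =
    (A.per (n + 1)).hom ≫ eqToHom (congrArg A.X (by ring)) ≫ s (n + d) ≫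
      (B.per n).inv
  htpy : ∀ n : ℤ, φ n - φ' n =
    A.f n ≫ s n +
      eqToHom (congrArg A.X (by ring)) ≫ s (n - 1) ≫ B.f (n - 1) ≫
        eqToHom (congrArg B.X (by ring))

/-- The homotopy relation on morphisms of `d`-fold factorizations. -/
def Homotopic {S : C ⥤ C} {η : 𝟭 C ⟶ S} {d : ℕ}
    (A B : Factorization S η d) (φ φ' : ∀ n : ℤ, A.X n ⟶ B.X n) : Prop :=
  ∃ s : ∀ n : ℤ, A.X (n + 1) ⟶ B.X n, IsHomotopy A B φ φ' s

/-- Although homotopies need not commute with the maps of the factorizations, they do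
commute with the square of the maps: `g_{i+1} ∘ g_i ∘ s_i = s_{i+2} ∘ f_{i+2} ∘ f_{i+1}`. -/
theorem homotopy_commutes_with_squares (S : C ⥤ C) [S.Additive] [S.IsEquivalence]
    (η : 𝟭 C ⟶ S) (hη : ∀ M : C, η.app (S.obj M) = S.map (η.app M))
    (d : ℕ) (hd : Even d) (hd2 : 2 ≤ d) (A B : Factorization S η d)
    (φ φ' : ∀ n : ℤ, A.X n ⟶ B.X n) (hφ : IsFactMor A B φ) (hφ' : IsFactMor A B φ')
    (s : ∀ n : ℤ, A.X (n + 1) ⟶ B.X n) (hs : IsHomotopy A B φ φ' s) :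
    ∀ n : ℤ, s n ≫ B.f n ≫ B.f (n + 1) =
      A.f (n + 1) ≫ eqToHom (congrArg A.X (by ring : n + 1 + 1 = n + 2)) ≫
        A.f (n + 2) ≫ s (n + 2) ≫ eqToHom (congrArg B.X (by ring : n + 2 = n + 1 + 1)) := by
  intro n
  have castφ : ∀ (g : ∀ k : ℤ, A.X k ⟶ B.X k) (m m' : ℤ) (h : m = m'),
      g m = eqToHom (congrArg A.X h) ≫ g m' ≫ eqToHom (congrArg B.X h.symm) := by
    rintro g m _ rfl; simp
  have casts : ∀ (m m' : ℤ) (h : m = m'),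
      s m = eqToHom (congrArg (fun k => A.X (k + 1)) h) ≫ s m' ≫
        eqToHom (congrArg B.X h.symm) := by
    rintro m _ rfl; simp
  have castB : ∀ (m m' : ℤ) (h : m = m'),
      B.f m = eqToHom (congrArg B.X h) ≫ B.f m' ≫
        eqToHom (congrArg (fun k => B.X (k + 1)) h.symm) := by
    rintro m _ rfl; simp
  have h1 := hs.htpy (n + 1)
  have h2 := hs.htpy (n + 2)
  have c1 := hφ.comm (n + 1)
  have c2 := hφ'.comm (n + 1)
  have e : (n + 1 + 1 : ℤ) = n + 2 := by ring
  rw [casts (n + 1 - 1) n (by ring), castB (n + 1 - 1) n (by ring)] at h1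
  rw [casts (n + 2 - 1) (n + 1) (by ring), castB (n + 2 - 1) (n + 1) (by ring)] at h2
  simp only [Category.assoc, eqToHom_trans, eqToHom_refl, Category.comp_id,
    Category.id_comp, eqToHom_trans_assoc] at h1 h2
  rw [castφ φ _ _ e] at c1
  rw [castφ φ' _ _ e] at c2
  have c : A.f (n + 1) ≫ eqToHom (congrArg A.X e) ≫ (φ (n + 2) - φ' (n + 2)) ≫
      eqToHom (congrArg B.X e.symm) = (φ (n + 1) - φ' (n + 1)) ≫ B.f (n + 1) := by
    simp only [Preadditive.sub_comp, Preadditive.comp_sub, Category.assoc] at c1 c2 ⊢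
    rw [c1, c2]
  rw [h1, h2] at c
  simp only [Preadditive.sub_comp, Preadditive.comp_sub, Preadditive.add_comp,
    Preadditive.comp_add, Category.assoc, eqToHom_trans, eqToHom_refl, Category.comp_id,
    Category.id_comp, eqToHom_trans_assoc] at c
  exact add_left_cancel (c.symm.trans (add_comm _ _))
end

section
/- The mapping cone of a morphism of d-fold factorizations is again a d-fold factorization when d is even: given a morphism φ : (M_i,f_i) → (N_i,g_i) of d-fold (𝒞,S)-factorizations of η, the sequence C_φ with objects M_{i+1} ⊕ N_i and maps given by the matrices [[−f_{i+1}, 0],[φ_{i+1}, g_i]] is a d-fold (𝒞,S)-factorization of η; i.e., every d-fold cyclic composition of these matrix maps equals η at the corresponding direct sum. -/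
/-!
Two consecutive maps of the cone compose to a diagonal matrix: the off-diagonal entry
`φ ≫ g - f ≫ φ` vanishes because `φ` is a morphism. Hence for even `d` the `d`-fold composite of
the cone maps is the direct sum of the `d`-fold composites of `-f` (which equals that of `f`
since `d` is even) and of `g`, and these are components of `η` because `A` and `B` are
factorizations. Finally, `η` at a biproduct is the biproduct of its components.
-/

open CategoryTheory CategoryTheory.Limits

universe v u

variable {C : Type u} [Category.{v} C] [Preadditive C]

instance {D : Type*} [Category D] [Preadditive D] (F : D ⥤ D) [F.Additive] :
    PreservesBinaryBiproducts F :=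
  preservesBinaryBiproducts_of_preservesBiproducts F

section Pcomp

variable {D : Type*} [Category D] {X Y : ℤ → D} (f : ∀ n : ℤ, X n ⟶ X (n + 1))

lemma pcomp_naturality (g : ∀ n : ℤ, Y n ⟶ Y (n + 1)) (ψ : ∀ n : ℤ, X n ⟶ Y n)
    (hψ : ∀ n, f n ≫ ψ (n + 1) = ψ n ≫ g n) (k : ℕ) (n : ℤ) :
    ψ n ≫ pcomp Y g k n = pcomp X f k n ≫ ψ (n + k) := by
  induction k generalizing n with
  | zero => simp [pcomp]
  | succ k ih =>
    simp only [pcomp, Category.assoc, ← reassoc_of% hψ, reassoc_of% ih]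
    rw [eqToHom_naturality ψ (by push_cast; ring)]

lemma pcomp_shift (k : ℕ) (n : ℤ) :
    pcomp (fun m => X (m + 1)) (fun m => f (m + 1)) k n =
      pcomp X f k (n + 1) ≫ eqToHom (congrArg X (by ring)) := by
  induction k generalizing n with
  | zero => simp [pcomp]
  | succ k ih => simp [pcomp, ih]

end Pcomp

lemma pcomp_neg {X : ℤ → C} (f : ∀ n : ℤ, X n ⟶ X (n + 1)) (k : ℕ) (n : ℤ) :
    pcomp X (fun m => -f m) k n = ((-1 : ℤ) ^ k) • pcomp X f k n := by
  induction k generalizing n with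
  | zero => simp [pcomp]
  | succ k ih => simp [pcomp, ih, pow_succ, mul_comm]

section Cone

variable [HasBinaryBiproducts C] {X Y : ℤ → C} (f : ∀ n : ℤ, X n ⟶ X (n + 1))
  (g : ∀ n : ℤ, Y n ⟶ Y (n + 1)) (φ : ∀ n : ℤ, X n ⟶ Y n)

noncomputable abbrev coneObj (X Y : ℤ → C) (m : ℤ) : C := X (m + 1) ⊞ Y m

noncomputable def coneMap (m : ℤ) : coneObj X Y m ⟶ coneObj X Y (m + 1) :=
  biprod.desc (biprod.lift (-f (m + 1)) (φ (m + 1))) (biprod.lift 0 (g m))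

lemma inl_coneMap (n : ℤ) :
    biprod.inl ≫ coneMap f g φ n = -f (n + 1) ≫ biprod.inl + φ (n + 1) ≫ biprod.inr := by
  simp only [coneMap, biprod.inl_desc]
  ext <;> simp

lemma inr_coneMap (n : ℤ) : biprod.inr ≫ coneMap f g φ n = g n ≫ biprod.inr := by
  simp only [coneMap, biprod.inr_desc]
  ext <;> simp

lemma coneMap_fst (n : ℤ) : coneMap f g φ n ≫ biprod.fst = biprod.fst ≫ (-f (n + 1)) := by
  apply biprod.hom_ext' <;> simp [coneMap]

lemma inr_pcomp_coneMap (k : ℕ) (n : ℤ) :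
    biprod.inr ≫ pcomp (coneObj X Y) (coneMap f g φ) k n = pcomp Y g k n ≫ biprod.inr :=
  pcomp_naturality g (coneMap f g φ) (fun _ => biprod.inr)
    (fun n => (inr_coneMap f g φ n).symm) k n

lemma pcomp_coneMap_fst (k : ℕ) (n : ℤ) :
    pcomp (coneObj X Y) (coneMap f g φ) k n ≫ biprod.fst =
      ((-1 : ℤ) ^ k) • (biprod.fst ≫ pcomp X f k (n + 1) ≫ eqToHom (congrArg X (by ring))) := by
  rw [← pcomp_naturality (coneMap f g φ) (fun m => -f (m + 1)) (fun _ => biprod.fst)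
    (coneMap_fst f g φ), pcomp_neg (fun m => f (m + 1)), pcomp_shift, Preadditive.comp_zsmul]

/- The off-diagonal terms `-f ≫ φ` and `φ ≫ g` of two consecutive cone maps cancel. -/
lemma inl_pcomp_coneMap_snd_add_two (hφ : ∀ n, f n ≫ φ (n + 1) = φ n ≫ g n) (k : ℕ) (n : ℤ) :
    biprod.inl ≫ pcomp (coneObj X Y) (coneMap f g φ) (k + 2) n ≫ biprod.snd =
      f (n + 1) ≫ f (n + 1 + 1) ≫ biprod.inl ≫
        pcomp (coneObj X Y) (coneMap f g φ) k (n + 1 + 1) ≫ biprod.snd ≫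
          eqToHom (congrArg Y (by push_cast; ring)) := by
  simp only [pcomp, Category.assoc, reassoc_of% inl_coneMap, reassoc_of% inr_coneMap,
    Preadditive.add_comp, Preadditive.neg_comp, Preadditive.comp_add, Preadditive.comp_neg,
    reassoc_of% hφ (n + 1), eqToHom_trans]
  rw [eqToHom_naturality (fun m => (biprod.snd : coneObj X Y m ⟶ Y m)) (by push_cast; ring)]
  abel

lemma inl_pcomp_coneMap_snd_of_even (hφ : ∀ n, f n ≫ φ (n + 1) = φ n ≫ g n) {k : ℕ}
    (hk : Even k) (n : ℤ) :
    biprod.inl ≫ pcomp (coneObj X Y) (coneMap f g φ) k n ≫ biprod.snd = 0 := by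
  induction k using Nat.twoStepInduction generalizing n with
  | zero =>
    rw [pcomp, ← eqToHom_naturality (fun m => (biprod.snd : coneObj X Y m ⟶ Y m)) (by simp)]
    simp
  | one => exact absurd hk Nat.not_even_one
  | more k ih _ =>
    have hk' : Even k := (Nat.even_add.mp hk).mpr even_two
    rw [inl_pcomp_coneMap_snd_add_two f g φ hφ, reassoc_of% ih hk']
    simp

lemma pcomp_coneMap_of_even (hφ : ∀ n, f n ≫ φ (n + 1) = φ n ≫ g n) {k : ℕ} (hk : Even k)
    (n : ℤ) :
    pcomp (coneObj X Y) (coneMap f g φ) k n =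
      biprod.map (pcomp X f k (n + 1) ≫ eqToHom (congrArg X (by ring))) (pcomp Y g k n) := by
  apply biprod.hom_ext' <;> apply biprod.hom_ext
  · simp [pcomp_coneMap_fst, hk.neg_one_pow]
  · simp [inl_pcomp_coneMap_snd_of_even f g φ hφ hk]
  · simp [reassoc_of% inr_pcomp_coneMap]
  · simp [reassoc_of% inr_pcomp_coneMap]

end Cone

lemma app_biprod_comp_mapBiprod_hom {S : C ⥤ C} [S.PreservesZeroMorphisms] (η : 𝟭 C ⟶ S)
    (P Q : C) [HasBinaryBiproduct P Q] [PreservesBinaryBiproduct P Q S] :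
    η.app (P ⊞ Q) ≫ (S.mapBiprod P Q).hom = biprod.map (η.app P) (η.app Q) := by
  rw [Functor.mapBiprod_hom]
  apply biprod.hom_ext
  · simpa using (η.naturality biprod.fst).symm
  · simpa using (η.naturality biprod.snd).symm

/-- The mapping cone of a morphism of `d`-fold factorizations is again a `d`-fold
factorization when `d` is even: each composite of `d` consecutive cone maps
`[[−f_{i+1}, 0], [φ_{i+1}, g_i]]` equals the component of `η` at the corresponding
direct sum `M_{i+1} ⊕ N_i`. -/
theorem cone_is_factorization [HasBinaryBiproducts C]
    (S : C ⥤ C) [S.Additive]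
    (η : 𝟭 C ⟶ S)
    (d : ℕ) (hd : Even d) (A B : Factorization S η d)
    (φ : ∀ n : ℤ, A.X n ⟶ B.X n) (hφ : IsFactMor A B φ) :
    ∀ n : ℤ,
      pcomp (fun m => A.X (m + 1) ⊞ B.X m)
        (fun m => biprod.desc (biprod.lift (-A.f (m + 1)) (φ (m + 1)))
          (biprod.lift 0 (B.f m))) d n =
      η.app (A.X (n + 1) ⊞ B.X n) ≫ (S.mapBiprod (A.X (n + 1)) (B.X n)).hom ≫
        biprod.map ((A.per (n + 1)).hom ≫ eqToHom (congrArg A.X (by ring)))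
          ((B.per n).hom) := by
  intro n
  refine (pcomp_coneMap_of_even A.f B.f φ hφ.comm hd n).trans ?_
  rw [A.comp_eq, B.comp_eq, reassoc_of% app_biprod_comp_mapBiprod_hom]
  apply biprod.hom_ext <;> simp
end

section
/- Let R be a commutative ring, x ∈ R, and (P --f--> Q --g--> P) a matrix factorization of x, i.e., P and Q are finitely generated projective R-modules with g∘f = x·1_P and f∘g = x·1_Q. If x is a non-zerodivisor, then the induced 2-periodic complex of R/(x)-modules ⋯ → P/xP --f̄--> Q/xQ --ḡ--> P/xP → ⋯ is exact: ker ḡ = im f̄ and ker f̄ = im ḡ. -/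
universe u v

lemma proj_torsion_free {R : Type u} [CommRing R] (x : R)
    (hx : ∀ r : R, x * r = 0 → r = 0)
    {M : Type v} [AddCommGroup M] [Module R M] [Module.Projective R M] : ∀ m : M, x • m = 0 → m = 0 := by
  intro m hm
  obtain ⟨s, hs⟩ := Module.Projective.out (R := R) (P := M)
  have hsinj : Function.Injective s := hs.injective
  apply hsinj
  have : s (x • m) = 0 := by rw [hm, map_zero]
  rw [map_smul] at this
  ext i
  have := congrArg (fun v => v i) this
  simp only [Finsupp.smul_apply, smul_eq_mul, Finsupp.coe_zero, Pi.zero_apply] at this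
  simpa using hx _ this

/-- Let `(P --f--> Q --g--> P)` be a matrix factorization of a non-zerodivisor `x` in a
commutative ring `R`. Then the induced 2-periodic complex of `R/(x)`-modules
`⋯ → P/xP → Q/xQ → P/xP → ⋯` is exact: `ker ḡ = im f̄` and `ker f̄ = im ḡ`
(stated elementwise in terms of coset representatives). -/
theorem matrix_factorization_reduction_exact
    (R : Type u) [CommRing R] (x : R) (hx : ∀ r : R, x * r = 0 → r = 0)
    (P Q : Type v) [AddCommGroup P] [Module R P] [AddCommGroup Q] [Module R Q]
    [Module.Finite R P] [Module.Projective R P]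
    [Module.Finite R Q] [Module.Projective R Q]
    (f : P →ₗ[R] Q) (g : Q →ₗ[R] P)
    (hgf : ∀ p : P, g (f p) = x • p) (hfg : ∀ q : Q, f (g q) = x • q) :
    (∀ q : Q, (∃ p₀ : P, g q = x • p₀) → ∃ (p : P) (q' : Q), q = f p + x • q') ∧
    (∀ p : P, (∃ q₀ : Q, f p = x • q₀) → ∃ (q : Q) (p' : P), p = g q + x • p') ∧
    (∀ p : P, ∃ p₀ : P, g (f p) = x • p₀) ∧
    (∀ q : Q, ∃ q₀ : Q, f (g q) = x • q₀) := by
  have hQtf : ∀ m : Q, x • m = 0 → m = 0 := proj_torsion_free x hx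
  have hPtf : ∀ m : P, x • m = 0 → m = 0 := proj_torsion_free x hx
  refine ⟨?_, ?_, fun p => ⟨p, hgf p⟩, fun q => ⟨q, hfg q⟩⟩
  · rintro q ⟨p₀, hp₀⟩
    refine ⟨p₀, 0, ?_⟩
    have : x • (q - f p₀) = 0 := by
      rw [smul_sub, ← hfg q, ← map_smul, ← hp₀, sub_self]
    have := hQtf _ this
    rw [sub_eq_zero] at this
    simp [this]
  · rintro p ⟨q₀, hq₀⟩
    refine ⟨q₀, 0, ?_⟩
    have : x • (p - g q₀) = 0 := by
      rw [smul_sub, ← hgf p, ← map_smul, ← hq₀, sub_self]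
    have := hPtf _ this
    rw [sub_eq_zero] at this
    simp [this]
end

section
/- In the setting of a matrix factorization (P --f--> Q --g--> P) of a non-zerodivisor x in a commutative ring R, the dualized 2-periodic complex is also exact: applying Hom_{R/(x)}(−, R/(x)) to the 2-periodic complex of P/xP and Q/xQ yields an exact complex. Equivalently, using Hom_R(−,R)/x: the sequence ⋯ → Hom_R(P,R)/x·Hom_R(P,R) --ḡ*--> Hom_R(Q,R)/x·Hom_R(Q,R) --f̄*--> Hom_R(P,R)/x·Hom_R(P,R) → ⋯ is exact. -/
universe u v

/-- In the setting of a matrix factorization `(P --f--> Q --g--> P)` of a non-zerodivisor `x`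
in a commutative ring `R`, the dualized 2-periodic complex
`⋯ → Hom(P,R)/x·Hom(P,R) --ḡ*--> Hom(Q,R)/x·Hom(Q,R) --f̄*--> Hom(P,R)/x·Hom(P,R) → ⋯`
is exact (stated elementwise in terms of coset representatives). -/
theorem matrix_factorization_dual_reduction_exact
    (R : Type u) [CommRing R] (x : R) (hx : ∀ r : R, x * r = 0 → r = 0)
    (P Q : Type v) [AddCommGroup P] [Module R P] [AddCommGroup Q] [Module R Q]
    [Module.Finite R P] [Module.Projective R P]
    [Module.Finite R Q] [Module.Projective R Q]
    (f : P →ₗ[R] Q) (g : Q →ₗ[R] P)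
    (hgf : ∀ p : P, g (f p) = x • p) (hfg : ∀ q : Q, f (g q) = x • q) :
    (∀ u : Q →ₗ[R] R, (∃ v : P →ₗ[R] R, u.comp f = x • v) →
      ∃ (w : P →ₗ[R] R) (u' : Q →ₗ[R] R), u = w.comp g + x • u') ∧
    (∀ w : P →ₗ[R] R, (∃ u : Q →ₗ[R] R, w.comp g = x • u) →
      ∃ (u : Q →ₗ[R] R) (w' : P →ₗ[R] R), w = u.comp f + x • w') ∧
    (∀ w : P →ₗ[R] R, ∃ v : P →ₗ[R] R, (w.comp g).comp f = x • v) ∧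
    (∀ u : Q →ₗ[R] R, ∃ v : Q →ₗ[R] R, (u.comp f).comp g = x • v) := by
  refine ⟨?_, ?_, ?_, ?_⟩
  · rintro u ⟨v, hv⟩
    refine ⟨v, 0, ?_⟩
    ext q
    simp only [LinearMap.add_apply, LinearMap.comp_apply, LinearMap.smul_apply, smul_zero,
      add_zero, smul_eq_mul]
    have h1 : u (f (g q)) = x * v (g q) := by
      have := congrArg (fun m : P →ₗ[R] R => m (g q)) hv
      simpa using this
    rw [hfg q] at h1
    simp only [map_smul, smul_eq_mul] at h1
    have := hx (u q - v (g q)) (by linear_combination h1)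
    linear_combination this
  · rintro w ⟨u, hu⟩
    refine ⟨u, 0, ?_⟩
    ext p
    simp only [LinearMap.add_apply, LinearMap.comp_apply, LinearMap.smul_apply, smul_zero,
      add_zero, smul_eq_mul]
    have h1 : w (g (f p)) = x * u (f p) := by
      have := congrArg (fun m : Q →ₗ[R] R => m (f p)) hu
      simpa using this
    rw [hgf p] at h1
    simp only [map_smul, smul_eq_mul] at h1
    have := hx (w p - u (f p)) (by linear_combination h1)
    linear_combination this
  · intro w
    refine ⟨w, ?_⟩
    ext p
    simp [LinearMap.comp_apply, hgf p]
  · intro u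
    refine ⟨u, ?_⟩
    ext q
    simp [LinearMap.comp_apply, hfg q]
end
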